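/- The ten vectors of Eq. (9), namely |0⟩⊗|1⟩⊗(|0⟩−|1⟩), |1⟩⊗(|0⟩−|1⟩)⊗|0⟩, (|0⟩−|1⟩)⊗|0⟩⊗|1⟩, |0⟩⊗(|0⟩+|1⟩)⊗|2⟩, |0⟩⊗(|0⟩−|1⟩)⊗|2⟩, |1⟩⊗(|0⟩+|1⟩)⊗|2⟩, |1⟩⊗(|0⟩−|1⟩)⊗|2⟩, and (|0⟩+|1⟩)⊗(|0⟩+|1⟩)⊗(|0⟩+|1⟩) in ℂ²⊗ℂ²⊗ℂ³ are pairwise orthogonal, and no nonzero product vector a⊗b⊗c (a,b∈ℂ², c∈ℂ³) is orthogonal to all of them. -/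

import Mathlib

noncomputable section

def e {n : ℕ} (i : Fin n) : EuclideanSpace ℂ (Fin n) := EuclideanSpace.single i 1

def tp {m n : ℕ} (a : EuclideanSpace ℂ (Fin m)) (b : EuclideanSpace ℂ (Fin n)) :
    EuclideanSpace ℂ (Fin m × Fin n) := WithLp.toLp 2 (fun p => a p.1 * b p.2)

def tp3 {l m n : ℕ} (a : EuclideanSpace ℂ (Fin l)) (b : EuclideanSpace ℂ (Fin m))
    (c : EuclideanSpace ℂ (Fin n)) : EuclideanSpace ℂ (Fin l × Fin m × Fin n) :=
  WithLp.toLp 2 (fun p => a p.1 * b p.2.1 * c p.2.2)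

def F : Fin 8 → EuclideanSpace ℂ (Fin 2 × Fin 2 × Fin 3) :=
  ![tp3 (e 0) (e 1) (e 0 - e 1), tp3 (e 1) (e 0 - e 1) (e 0), tp3 (e 0 - e 1) (e 0) (e 1),
    tp3 (e 0) (e 0 + e 1) (e 2), tp3 (e 0) (e 0 - e 1) (e 2), tp3 (e 1) (e 0 + e 1) (e 2),
    tp3 (e 1) (e 0 - e 1) (e 2), tp3 (e 0 + e 1) (e 0 + e 1) (e 0 + e 1)]


lemma mul3 {x y z : ℂ} (h : x * y * z = 0) : x = 0 ∨ y = 0 ∨ z = 0 := by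
  rcases mul_eq_zero.mp h with h' | h'
  · rcases mul_eq_zero.mp h' with h'' | h''
    · exact Or.inl h''
    · exact Or.inr (Or.inl h'')
  · exact Or.inr (Or.inr h')

lemma key (a0 a1 b0 b1 c0 c1 c2 : ℂ)
    (ha : a0 ≠ 0 ∨ a1 ≠ 0) (hb : b0 ≠ 0 ∨ b1 ≠ 0) (hc : c0 ≠ 0 ∨ c1 ≠ 0 ∨ c2 ≠ 0)
    (h0 : a0 * b1 * (c0 - c1) = 0)
    (h1 : a1 * (b0 - b1) * c0 = 0)
    (h2 : (a0 - a1) * b0 * c1 = 0)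
    (h3 : a0 * (b0 + b1) * c2 = 0)
    (h4 : a0 * (b0 - b1) * c2 = 0)
    (h5 : a1 * (b0 + b1) * c2 = 0)
    (h6 : a1 * (b0 - b1) * c2 = 0)
    (h7 : (a0 + a1) * (b0 + b1) * (c0 + c1) = 0) : False := by
  by_cases hc2 : c2 = 0
  · subst hc2
    have hc' : c0 ≠ 0 ∨ c1 ≠ 0 := by
      rcases hc with h | h | h
      · exact Or.inl h
      · exact Or.inr h
      · exact absurd rfl h
    by_cases ha0 : a0 = 0
    · have ha1 : a1 ≠ 0 := by rcases ha with h | h; exacts [absurd ha0 h, h]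
      -- h2 gives b0 * c1 = 0
      have hbc : b0 = 0 ∨ c1 = 0 := by
        rcases mul3 h2 with h | h | h
        · exact absurd (show a1 = 0 by linear_combination ha0 - h) ha1
        · exact Or.inl h
        · exact Or.inr h
      rcases hbc with hb0 | hc1
      · have hb1 : b1 ≠ 0 := by rcases hb with h | h; exacts [absurd hb0 h, h]
        have hc0 : c0 = 0 := by
          rcases mul3 h1 with h | h | h
          · exact absurd h ha1
          · exact absurd (show b1 = 0 by linear_combination hb0 - h) hb1
          · exact h
        have hc1 : c1 ≠ 0 := by rcases hc' with h | h; exacts [absurd hc0 h, h]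
        rcases mul3 h7 with h | h | h
        · exact ha1 (by linear_combination h - ha0)
        · exact hb1 (by linear_combination h - hb0)
        · exact hc1 (by linear_combination h - hc0)
      · have hc0 : c0 ≠ 0 := by rcases hc' with h | h; exacts [h, absurd hc1 h]
        have hb0 : b0 ≠ 0 := by
          intro hb0
          rcases hb with h | h
          · exact h hb0
          · -- b1 ≠ 0; from h1 : a1 (b0-b1) c0; a1≠0, c0≠0 → b0 = b1 → b1 = 0 contra
            rcases mul3 h1 with h' | h' | h'
            · exact ha1 h'
            · exact h (by linear_combination hb0 - h')
            · exact hc0 h'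
        have hbb : b0 = b1 := by
          rcases mul3 h1 with h' | h' | h'
          · exact absurd h' ha1
          · linear_combination h'
          · exact absurd h' hc0
        rcases mul3 h7 with h | h | h
        · exact ha1 (by linear_combination h - ha0)
        · exact hb0 (by linear_combination h / 2 + hbb / 2)
        · exact hc0 (by linear_combination h - hc1)
    · -- a0 ≠ 0
      by_cases ha1 : a1 = 0
      · -- h0: b1 (c0-c1) = 0 ; h2: b0 c1 = 0 ; h7: (b0+b1)(c0+c1)=0
        have h0' : b1 = 0 ∨ c0 - c1 = 0 := by
          rcases mul3 h0 with h | h | h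
          · exact absurd h ha0
          · exact Or.inl h
          · exact Or.inr h
        have h2' : b0 = 0 ∨ c1 = 0 := by
          rcases mul3 h2 with h | h | h
          · exact absurd (show a0 = 0 by linear_combination h + ha1) ha0
          · exact Or.inl h
          · exact Or.inr h
        rcases h0' with hb1 | hcc
        · have hb0 : b0 ≠ 0 := by rcases hb with h | h; exacts [h, absurd hb1 h]
          have hc1 : c1 = 0 := by rcases h2' with h | h; exacts [absurd h hb0, h]
          have hc0 : c0 ≠ 0 := by rcases hc' with h | h; exacts [h, absurd hc1 h]
          rcases mul3 h7 with h | h | h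
          · exact ha0 (by linear_combination h - ha1)
          · exact hb0 (by linear_combination h - hb1)
          · exact hc0 (by linear_combination h - hc1)
        · -- c0 = c1
          have hc1 : c1 ≠ 0 := by
            rcases hc' with h | h
            · intro h'; exact h (by linear_combination hcc + h')
            · exact h
          have hb0 : b0 = 0 := by rcases h2' with h | h; exacts [h, absurd h hc1]
          have hb1 : b1 ≠ 0 := by rcases hb with h | h; exacts [absurd hb0 h, h]
          rcases mul3 h7 with h | h | h
          · exact ha0 (by linear_combination h - ha1)
          · exact hb1 (by linear_combination h - hb0)
          · exact hc1 (by linear_combination (h - hcc) / 2)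
      · -- a0 ≠ 0, a1 ≠ 0
        have h0' : b1 = 0 ∨ c0 - c1 = 0 := by
          rcases mul3 h0 with h | h | h
          · exact absurd h ha0
          · exact Or.inl h
          · exact Or.inr h
        rcases h0' with hb1 | hcc
        · have hb0 : b0 ≠ 0 := by rcases hb with h | h; exacts [h, absurd hb1 h]
          have hc0 : c0 = 0 := by
            rcases mul3 h1 with h | h | h
            · exact absurd h ha1
            · exact absurd (show b0 = 0 by linear_combination h + hb1) hb0
            · exact h
          have hc1 : c1 ≠ 0 := by rcases hc' with h | h; exacts [absurd hc0 h, h]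
          have haa : a0 = a1 := by
            rcases mul3 h2 with h | h | h
            · linear_combination h
            · exact absurd h hb0
            · exact absurd h hc1
          rcases mul3 h7 with h | h | h
          · exact ha0 (by linear_combination h / 2 + haa / 2)
          · exact hb0 (by linear_combination h - hb1)
          · exact hc1 (by linear_combination h - hc0)
        · -- c0 = c1
          have hc0 : c0 ≠ 0 := by
            rcases hc' with h | h
            · exact h
            · intro h'; exact h (by linear_combination -hcc + h')
          have hc1 : c1 ≠ 0 := fun h' => hc0 (by linear_combination hcc + h')
          have hbb : b0 = b1 := by
            rcases mul3 h1 with h | h | h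
            · exact absurd h ha1
            · linear_combination h
            · exact absurd h hc0
          have hb0 : b0 ≠ 0 := by
            rcases hb with h | h
            · exact h
            · intro h'; exact h (by linear_combination -hbb + h')
          have haa : a0 = a1 := by
            rcases mul3 h2 with h | h | h
            · linear_combination h
            · exact absurd h hb0
            · exact absurd h hc1
          rcases mul3 h7 with h | h | h
          · exact ha0 (by linear_combination h / 2 + haa / 2)
          · exact hb0 (by linear_combination h / 2 + hbb / 2)
          · exact hc0 (by linear_combination h / 2 + hcc / 2)
  · -- c2 ≠ 0
    by_cases ha0 : a0 = 0
    · have ha1 : a1 ≠ 0 := by rcases ha with h | h; exacts [absurd ha0 h, h]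
      have e5 : b0 + b1 = 0 := by
        rcases mul3 h5 with h | h | h
        · exact absurd h ha1
        · exact h
        · exact absurd h hc2
      have e6 : b0 - b1 = 0 := by
        rcases mul3 h6 with h | h | h
        · exact absurd h ha1
        · exact h
        · exact absurd h hc2
      rcases hb with h | h
      · exact h (by linear_combination (e5 + e6) / 2)
      · exact h (by linear_combination (e5 - e6) / 2)
    · have e3 : b0 + b1 = 0 := by
        rcases mul3 h3 with h | h | h
        · exact absurd h ha0
        · exact h
        · exact absurd h hc2
      have e4 : b0 - b1 = 0 := by
        rcases mul3 h4 with h | h | h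
        · exact absurd h ha0
        · exact h
        · exact absurd h hc2
      rcases hb with h | h
      · exact h (by linear_combination (e3 + e4) / 2)
      · exact h (by linear_combination (e3 - e4) / 2)

lemma inner_tp3 {l m n : ℕ} (x a : EuclideanSpace ℂ (Fin l)) (y b : EuclideanSpace ℂ (Fin m))
    (z c : EuclideanSpace ℂ (Fin n)) :
    inner ℂ (tp3 x y z) (tp3 a b c) = (inner ℂ x a * inner ℂ y b * inner ℂ z c : ℂ) := by
  simp only [tp3, PiLp.inner_apply, PiLp.toLp_apply, RCLike.inner_apply, map_mul, Fintype.sum_prod_type]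
  conv_rhs => rw [Finset.sum_mul_sum, Finset.sum_mul_sum]
  apply Finset.sum_congr rfl; intro i _
  rw [Finset.sum_comm]
  apply Finset.sum_congr rfl; intro k _
  rw [Finset.sum_mul]
  apply Finset.sum_congr rfl; intro j _
  ring

lemma F0 : F 0 = tp3 (e 0) (e 1) (e 0 - e 1) := rfl
lemma F1 : F 1 = tp3 (e 1) (e 0 - e 1) (e 0) := rfl
lemma F2 : F 2 = tp3 (e 0 - e 1) (e 0) (e 1) := rfl
lemma F3 : F 3 = tp3 (e 0) (e 0 + e 1) (e 2) := rfl
lemma F4 : F 4 = tp3 (e 0) (e 0 - e 1) (e 2) := rfl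
lemma F5 : F 5 = tp3 (e 1) (e 0 + e 1) (e 2) := rfl
lemma F6 : F 6 = tp3 (e 1) (e 0 - e 1) (e 2) := rfl
lemma F7 : F 7 = tp3 (e 0 + e 1) (e 0 + e 1) (e 0 + e 1) := rfl

set_option maxHeartbeats 2000000 in
theorem eq9_upb :
    (∀ i j : Fin 8, i ≠ j → inner ℂ (F i) (F j) = (0 : ℂ)) ∧
    ¬ ∃ (a b : EuclideanSpace ℂ (Fin 2)) (c : EuclideanSpace ℂ (Fin 3)),
      tp3 a b c ≠ 0 ∧ ∀ i : Fin 8, inner ℂ (F i) (tp3 a b c) = (0 : ℂ) := by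
  constructor
  · intro i j hij
    have hi : i = 0 ∨ i = 1 ∨ i = 2 ∨ i = 3 ∨ i = 4 ∨ i = 5 ∨ i = 6 ∨ i = 7 := by omega
    have hj : j = 0 ∨ j = 1 ∨ j = 2 ∨ j = 3 ∨ j = 4 ∨ j = 5 ∨ j = 6 ∨ j = 7 := by omega
    rcases hi with rfl | rfl | rfl | rfl | rfl | rfl | rfl | rfl <;>
      rcases hj with rfl | rfl | rfl | rfl | rfl | rfl | rfl | rfl <;>
      first
      | exact absurd rfl hij
      | (simp only [F0, F1, F2, F3, F4, F5, F6, F7, inner_tp3];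
         simp [e, inner_sub_left, inner_add_left, inner_sub_right, inner_add_right,
           EuclideanSpace.inner_single_left, EuclideanSpace.single_apply];
         try ring)
  · rintro ⟨a, b, c, hne, hort⟩
    have hex : ∃ p : Fin 2 × Fin 2 × Fin 3, a p.1 * b p.2.1 * c p.2.2 ≠ 0 := by
      by_contra h
      push_neg at h
      exact hne (by ext p; simpa [tp3] using h p)
    obtain ⟨⟨i, j, k⟩, hp⟩ := hex
    have hA : a i ≠ 0 := fun h => hp (by simp [h])
    have hB : b j ≠ 0 := fun h => hp (by simp [h])
    have hC : c k ≠ 0 := fun h => hp (by simp [h])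
    have ha : a 0 ≠ 0 ∨ a 1 ≠ 0 := by
      have h : i = 0 ∨ i = 1 := by omega
      rcases h with rfl | rfl
      · exact Or.inl hA
      · exact Or.inr hA
    have hb : b 0 ≠ 0 ∨ b 1 ≠ 0 := by
      have h : j = 0 ∨ j = 1 := by omega
      rcases h with rfl | rfl
      · exact Or.inl hB
      · exact Or.inr hB
    have hc : c 0 ≠ 0 ∨ c 1 ≠ 0 ∨ c 2 ≠ 0 := by
      have h : k = 0 ∨ k = 1 ∨ k = 2 := by omega
      rcases h with rfl | rfl | rfl
      · exact Or.inl hC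
      · exact Or.inr (Or.inl hC)
      · exact Or.inr (Or.inr hC)
    have h0 := hort 0; have h1 := hort 1; have h2 := hort 2; have h3 := hort 3
    have h4 := hort 4; have h5 := hort 5; have h6 := hort 6; have h7 := hort 7
    rw [F0, inner_tp3] at h0
    rw [F1, inner_tp3] at h1
    rw [F2, inner_tp3] at h2
    rw [F3, inner_tp3] at h3
    rw [F4, inner_tp3] at h4
    rw [F5, inner_tp3] at h5
    rw [F6, inner_tp3] at h6
    rw [F7, inner_tp3] at h7
    simp only [e, inner_sub_left, inner_add_left, EuclideanSpace.inner_single_left,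
      map_one, one_mul] at h0 h1 h2 h3 h4 h5 h6 h7
    exact key (a 0) (a 1) (b 0) (b 1) (c 0) (c 1) (c 2) ha hb hc h0 h1 h2 h3 h4 h5 h6 h7
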